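/- For every fixed integer k ≥ 0, there exists a constant C > 0 such that for every integer N ≥ 1, with h = 1/N, one has max_{0 ≤ i ≤ N} |U_k(t_i) − u_k(t_i)| ≤ C h² and max_{0 ≤ i ≤ N} |V_k(t_i) − v_k(t_i)| ≤ C h². -/

import Mathlib

open Set MeasureTheory

/-- The Green function of the problem `u''' = ψ`, `u(0) = u'(0) = u'(1) = 0` on `[0,1]`. -/
noncomputable def G01 (t s : ℝ) : ℝ :=
  if s ≤ t then s / 2 * (t ^ 2 - 2 * t + s) else t ^ 2 / 2 * (s - 1)

/-- The quadratic polynomial with `g(0) = b1`, `g'(0) = b2`, `g'(1) = b3`. -/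
noncomputable def gq (b1 b2 b3 t : ℝ) : ℝ := b1 + b2 * t + (b3 - b2) / 2 * t ^ 2

/-- Trapezoidal weights: `ρ_0 = ρ_N = 1/2` and `ρ_j = 1` for `1 ≤ j ≤ N − 1`. -/
noncomputable def trapWeight (N j : ℕ) : ℝ := if j = 0 ∨ j = N then 1 / 2 else 1

/-- Continuous iteration: `ψ₀(t) = f(t,0,0)`, `ψ_{k+1}(t) = f(t, u_k(t), v_k(t))`, where
`u_k(t) = g(t) + ∫₀¹ G(t,s) ψ_k(s) ds` and `v_k(t) = u_k(φ(t))`. -/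
noncomputable def psiC (f : ℝ → ℝ → ℝ → ℝ) (φ : ℝ → ℝ) (b1 b2 b3 : ℝ) : ℕ → ℝ → ℝ
  | 0 => fun t => f t 0 0
  | k + 1 => fun t =>
      f t (gq b1 b2 b3 t + ∫ s in (0:ℝ)..1, G01 t s * psiC f φ b1 b2 b3 k s)
        (gq b1 b2 b3 (φ t) + ∫ s in (0:ℝ)..1, G01 (φ t) s * psiC f φ b1 b2 b3 k s)

/-- `u_k(t) = g(t) + ∫₀¹ G(t,s) ψ_k(s) ds`. -/
noncomputable def uC (f : ℝ → ℝ → ℝ → ℝ) (φ : ℝ → ℝ) (b1 b2 b3 : ℝ) (k : ℕ) (t : ℝ) : ℝ :=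
  gq b1 b2 b3 t + ∫ s in (0:ℝ)..1, G01 t s * psiC f φ b1 b2 b3 k s

/-- `v_k(t) = u_k(φ(t))`. -/
noncomputable def vC (f : ℝ → ℝ → ℝ → ℝ) (φ : ℝ → ℝ) (b1 b2 b3 : ℝ) (k : ℕ) (t : ℝ) : ℝ :=
  uC f φ b1 b2 b3 k (φ t)

/-- Discrete iteration: `Ψ₀(t_i) = f(t_i,0,0)`,
`Ψ_{k+1}(t_i) = f(t_i, U_k(t_i), V_k(t_i))`, where `U_k`, `V_k` are trapezoidal
approximations of `u_k`, `v_k` on the uniform grid `t_i = i/N`. -/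
noncomputable def PsiD (f : ℝ → ℝ → ℝ → ℝ) (φ : ℝ → ℝ) (b1 b2 b3 : ℝ) (N : ℕ) :
    ℕ → ℕ → ℝ
  | 0 => fun i => f ((i : ℝ) / N) 0 0
  | k + 1 => fun i =>
      f ((i : ℝ) / N)
        (gq b1 b2 b3 ((i : ℝ) / N) + ∑ j ∈ Finset.range (N + 1),
          (1 / (N:ℝ)) * trapWeight N j * G01 ((i : ℝ) / N) ((j : ℝ) / N) *
            PsiD f φ b1 b2 b3 N k j)
        (gq b1 b2 b3 (φ ((i : ℝ) / N)) + ∑ j ∈ Finset.range (N + 1),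
          (1 / (N:ℝ)) * trapWeight N j * G01 (φ ((i : ℝ) / N)) ((j : ℝ) / N) *
            PsiD f φ b1 b2 b3 N k j)

/-- `U_k(t_i) = g(t_i) + Σ_j h ρ_j G(t_i, t_j) Ψ_k(t_j)`. -/
noncomputable def UD (f : ℝ → ℝ → ℝ → ℝ) (φ : ℝ → ℝ) (b1 b2 b3 : ℝ) (N k i : ℕ) : ℝ :=
  gq b1 b2 b3 ((i : ℝ) / N) + ∑ j ∈ Finset.range (N + 1),
    (1 / (N:ℝ)) * trapWeight N j * G01 ((i : ℝ) / N) ((j : ℝ) / N) * PsiD f φ b1 b2 b3 N k j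

/-- `V_k(t_i) = g(ξ_i) + Σ_j h ρ_j G(ξ_i, t_j) Ψ_k(t_j)`, with `ξ_i = φ(t_i)`. -/
noncomputable def VD (f : ℝ → ℝ → ℝ → ℝ) (φ : ℝ → ℝ) (b1 b2 b3 : ℝ) (N k i : ℕ) : ℝ :=
  gq b1 b2 b3 (φ ((i : ℝ) / N)) + ∑ j ∈ Finset.range (N + 1),
    (1 / (N:ℝ)) * trapWeight N j * G01 (φ ((i : ℝ) / N)) ((j : ℝ) / N) *
      PsiD f φ b1 b2 b3 N k j

/-!
For fixed `t`, the Green function `G(t, ·)` is `C¹` on `[0,1]`: its two branches have the same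
slope `t² / 2` at `s = t`, and its `s`-derivative `t² / 2 - t + min s t` is `1`-Lipschitz. So
for `ψ ∈ C²` the integrand `s ↦ G(t,s) ψ(s)` has a derivative that is Lipschitz uniformly in `t`,
and the composite trapezoidal rule, with per-cell error `O(h³)` for such integrands, computes
`∫₀¹ G(t,s) ψ(s) ds` up to `O(h²)` uniformly in `t`, the kink of `∂ₛG` on the diagonal
notwithstanding.

The continuous iterates `ψ_k` stay `C²`, because `t ↦ ∫₀¹ G(t,s) ψ(s) ds` is a combination of
polynomials and primitives of `C¹` functions. By induction on `k`, `|Ψ_k(t_i) - ψ_k(t_i)| ≤ C_k h²`: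
the trapezoidal weights are nonnegative with sum `1` and `|G| ≤ 1`, so replacing `ψ_k` by `Ψ_k`
in the discrete sums costs at most `max_j |Ψ_k(t_j) - ψ_k(t_j)|`, and the Lipschitz condition on
`f` carries the resulting `O(h²)` errors of `U_k`, `V_k` over to `Ψ_{k+1}`.
-/

open scoped NNReal

theorem hasDerivWithinAt_integral_Icc {g : ℝ → ℝ} {a b x : ℝ} (hg : ContinuousOn g (Icc a b))
    (hx : x ∈ Icc a b) : HasDerivWithinAt (fun u => ∫ s in a..u, g s) (g x) (Icc a b) x := by
  have := Fact.mk hx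
  exact intervalIntegral.integral_hasDerivWithinAt_right
    ((hg.mono (Icc_subset_Icc le_rfl hx.2)).intervalIntegrable_of_Icc hx.1)
    (hg.stronglyMeasurableAtFilter_nhdsWithin measurableSet_Icc x) (hg.continuousWithinAt hx)

theorem contDiffOn_integral_Icc {g : ℝ → ℝ} {a b : ℝ} (hab : a < b) {n : ℕ}
    (hg : ContDiffOn ℝ n g (Icc a b)) :
    ContDiffOn ℝ (n + 1) (fun u => ∫ s in a..u, g s) (Icc a b) := by
  have hu : UniqueDiffOn ℝ (Icc a b) := uniqueDiffOn_Icc hab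
  have hderiv := fun x (hx : x ∈ Icc a b) => hasDerivWithinAt_integral_Icc hg.continuousOn hx
  rw [contDiffOn_succ_iff_derivWithin hu]
  refine ⟨fun x hx => (hderiv x hx).differentiableWithinAt, by simp, hg.congr fun x hx => ?_⟩
  exact (hderiv x hx).derivWithin (hu x hx)

theorem LipschitzOnWith.mul_of_norm_le {α R : Type*} [PseudoMetricSpace α] [SeminormedRing R]
    {f g : α → R} {s : Set α} {Kf Kg A B : ℝ≥0} (hf : LipschitzOnWith Kf f s)
    (hg : LipschitzOnWith Kg g s) (hfA : ∀ x ∈ s, ‖f x‖ ≤ A) (hgB : ∀ x ∈ s, ‖g x‖ ≤ B) :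
    LipschitzOnWith (A * Kg + B * Kf) (fun x => f x * g x) s := by
  refine LipschitzOnWith.of_dist_le_mul fun x hx y hy => ?_
  rw [dist_eq_norm, show f x * g x - f y * g y = f x * (g x - g y) + (f x - f y) * g y by
    noncomm_ring]
  calc _ ≤ ‖f x‖ * ‖g x - g y‖ + ‖f x - f y‖ * ‖g y‖ :=
        (norm_add_le _ _).trans (add_le_add (norm_mul_le _ _) (norm_mul_le _ _))
    _ ≤ A * (Kg * dist x y) + Kf * dist x y * B := by
        rw [← dist_eq_norm, ← dist_eq_norm]
        gcongr
        exacts [hfA x hx, hg.dist_le_mul x hx y hy, hf.dist_le_mul x hx y hy, hgB y hy]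
    _ = (A * Kg + B * Kf : ℝ≥0) * dist x y := by push_cast; ring

theorem exists_nnreal_bound_of_continuousOn_Icc {g : ℝ → ℝ} {a b : ℝ}
    (hg : ContinuousOn g (Icc a b)) : ∃ A : ℝ≥0, ∀ x ∈ Icc a b, ‖g x‖ ≤ A := by
  obtain ⟨A, hA⟩ := isCompact_Icc.exists_bound_of_continuousOn hg
  exact ⟨A.toNNReal, fun x hx => (hA x hx).trans (Real.le_coe_toNNReal A)⟩

theorem abs_sub_sub_mul_le_of_lipschitzOnWith {f f' : ℝ → ℝ} {K : ℝ≥0} {a b : ℝ}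
    (hf : ∀ x ∈ Icc a b, HasDerivWithinAt f (f' x) (Icc a b) x)
    (hf' : LipschitzOnWith K f' (Icc a b)) {x y : ℝ} (hx : x ∈ Icc a b) (hy : y ∈ Icc a b) :
    |f y - f x - (y - x) * f' y| ≤ K * (b - a) * |y - x| := by
  have hderiv : ∀ z ∈ Icc a b,
      HasDerivWithinAt (fun z => f z - z * f' y) (f' z - f' y) (Icc a b) z := fun z hz =>
    (hf z hz).sub (by simpa using (hasDerivWithinAt_id z (Icc a b)).mul_const (f' y))
  have hbound : ∀ z ∈ Icc a b, ‖f' z - f' y‖ ≤ K * (b - a) := fun z hz => by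
    rw [← dist_eq_norm]
    refine (hf'.dist_le_mul z hz y hy).trans (mul_le_mul_of_nonneg_left ?_ K.2)
    rw [Real.dist_eq, abs_le]
    constructor <;> linarith [hz.1, hz.2, hy.1, hy.2]
  have := (convex_Icc a b).norm_image_sub_le_of_norm_hasDerivWithin_le hderiv hbound hx hy
  rw [Real.norm_eq_abs, Real.norm_eq_abs] at this
  convert this using 2
  ring

theorem trapezoidal_error_one_le_of_lipschitzOnWith {f f' : ℝ → ℝ} {K : ℝ≥0} {a b : ℝ}
    (hab : a ≤ b) (hf : ∀ x ∈ Icc a b, HasDerivWithinAt f (f' x) (Icc a b) x)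
    (hf' : LipschitzOnWith K f' (Icc a b)) :
    |trapezoidal_error f 1 a b| ≤ K * (b - a) ^ 3 / 2 := by
  have ha : a ∈ Icc a b := ⟨le_rfl, hab⟩
  have hb : b ∈ Icc a b := ⟨hab, le_rfl⟩
  have hfc : ContinuousOn f (Icc a b) := fun x hx => (hf x hx).continuousWithinAt
  set e : ℝ → ℝ := fun x => (x - a) / 2 * (f a + f x) - ∫ s in a..x, f s
  have he : ∀ x ∈ Icc a b, HasDerivWithinAt e
      ((x - a) / 2 * f' x - (f x - f a) / 2) (Icc a b) x := fun x hx => by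
    have hlin : HasDerivWithinAt (fun x : ℝ => (x - a) / 2) (1 / 2) (Icc a b) x := by
      simpa using ((hasDerivWithinAt_id x (Icc a b)).sub_const a).div_const 2
    exact ((hlin.fun_mul ((hf x hx).const_add (f a))).fun_sub
      (hasDerivWithinAt_integral_Icc hfc hx)).congr_deriv (by ring)
  have hbound : ∀ x ∈ Icc a b, ‖(x - a) / 2 * f' x - (f x - f a) / 2‖ ≤ K * (b - a) ^ 2 / 2 :=
    fun x hx => by
      have h := abs_sub_sub_mul_le_of_lipschitzOnWith hf hf' ha hx
      rw [Real.norm_eq_abs, abs_of_nonneg (sub_nonneg.2 hx.1)] at *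
      calc |(x - a) / 2 * f' x - (f x - f a) / 2| = |f x - f a - (x - a) * f' x| / 2 := by
            rw [show (x - a) / 2 * f' x - (f x - f a) / 2 = -(f x - f a - (x - a) * f' x) / 2 by
              ring, abs_div, abs_neg, abs_two]
        _ ≤ K * (b - a) * (b - a) / 2 := by gcongr; exact h.trans (by gcongr; exact hx.2)
        _ = K * (b - a) ^ 2 / 2 := by ring
  have := (convex_Icc a b).norm_image_sub_le_of_norm_hasDerivWithin_le he hbound ha hb
  simp only [e, sub_self, zero_div, zero_mul, intervalIntegral.integral_same, sub_zero] at this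
  rw [trapezoidal_error, trapezoidal_integral_one, ← Real.norm_eq_abs]
  calc _ ≤ K * (b - a) ^ 2 / 2 * ‖b - a‖ := this
    _ = K * (b - a) ^ 3 / 2 := by rw [Real.norm_eq_abs, abs_of_nonneg (sub_nonneg.2 hab)]; ring

theorem trapezoidal_error_le_of_lipschitzOnWith {f f' : ℝ → ℝ} {K : ℝ≥0} {a b : ℝ}
    (hab : a ≤ b) (hf : ∀ x ∈ Icc a b, HasDerivWithinAt f (f' x) (Icc a b) x)
    (hf' : LipschitzOnWith K f' (Icc a b)) {N : ℕ} (hN : 0 < N) :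
    |trapezoidal_error f N a b| ≤ K * (b - a) ^ 3 / (2 * N ^ 2) := by
  set h := (b - a) / N
  have hh : 0 ≤ h := div_nonneg (sub_nonneg.2 hab) N.cast_nonneg
  have hb : b = a + N * h := by
    rw [mul_div_cancel₀ _ (Nat.cast_ne_zero.2 hN.ne')]; ring
  have hnode : ∀ k : ℕ, k ≤ N → a + k * h ∈ Icc a b := fun k hk =>
    ⟨le_add_of_nonneg_right (by positivity), by rw [hb]; gcongr⟩
  have hcell : ∀ k ∈ Finset.range N,
      |trapezoidal_error f 1 (a + k * h) (a + (k + 1) * h)| ≤ K * h ^ 3 / 2 := by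
    intro k hk
    have hk : k + 1 ≤ N := Finset.mem_range.1 hk
    have hsub : Icc (a + k * h) (a + (k + 1) * h) ⊆ Icc a b :=
      Icc_subset_Icc (hnode k (by omega)).1 (by exact_mod_cast (hnode (k + 1) hk).2)
    convert trapezoidal_error_one_le_of_lipschitzOnWith (by nlinarith)
      (fun x hx => (hf x (hsub hx)).mono hsub) (hf'.mono hsub) using 2
    ring
  have hint : IntervalIntegrable f volume a (a + N * h) :=
    hb ▸ (ContinuousOn.intervalIntegrable_of_Icc hab fun x hx => (hf x hx).continuousWithinAt)
  rw [hb, ← sum_trapezoidal_error_adjacent_intervals hN hint]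
  calc _ ≤ ∑ k ∈ Finset.range N, |trapezoidal_error f 1 (a + k * h) (a + (k + 1) * h)| :=
        Finset.abs_sum_le_sum_abs _ _
    _ ≤ ∑ k ∈ Finset.range N, K * h ^ 3 / 2 := Finset.sum_le_sum hcell
    _ = K * (a + N * h - a) ^ 3 / (2 * N ^ 2) := by
        rw [Finset.sum_const, Finset.card_range, nsmul_eq_mul]
        field_simp
        ring

theorem trapWeight_nonneg (N j : ℕ) : 0 ≤ trapWeight N j := by
  unfold trapWeight; split_ifs <;> norm_num

theorem sum_trapWeight_mul_eq_trapezoidal_integral (F : ℝ → ℝ) {N : ℕ} (hN : 0 < N) :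
    ∑ j ∈ Finset.range (N + 1), 1 / (N : ℝ) * trapWeight N j * F (j / N)
      = trapezoidal_integral F N 0 1 := by
  obtain ⟨M, rfl⟩ : ∃ M, N = M + 1 := ⟨N - 1, by omega⟩
  have hinner : ∀ k ∈ Finset.range M, trapWeight (M + 1) (k + 1) = 1 := fun k hk => by
    rw [trapWeight, if_neg]
    simp only [Finset.mem_range] at hk
    omega
  have hend : trapWeight (M + 1) 0 = 1 / 2 ∧ trapWeight (M + 1) (M + 1) = 1 / 2 :=
    ⟨if_pos (Or.inl rfl), if_pos (Or.inr rfl)⟩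
  have hM : (M + 1 : ℝ) ≠ 0 := M.cast_add_one_ne_zero
  rw [Finset.sum_range_succ, Finset.sum_range_succ', Finset.sum_congr rfl fun k hk => by
    rw [hinner k hk], hend.1, hend.2, trapezoidal_integral, Nat.add_sub_cancel, mul_add,
    Finset.mul_sum]
  push_cast
  rw [div_self hM]
  simp only [zero_div, sub_zero, zero_add, mul_one]
  ring

theorem sum_trapWeight {N : ℕ} (hN : 0 < N) :
    ∑ j ∈ Finset.range (N + 1), 1 / (N : ℝ) * trapWeight N j = 1 := by
  have h := sum_trapWeight_mul_eq_trapezoidal_integral (fun _ => 1) hN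
  simp only [mul_one] at h
  rw [h, trapezoidal_integral]
  simp [Nat.cast_sub hN, hN.ne']

theorem abs_sum_trapWeight_mul_le {N : ℕ} (hN : 0 < N) {a : ℕ → ℝ} {E : ℝ}
    (ha : ∀ j ≤ N, |a j| ≤ E) :
    |∑ j ∈ Finset.range (N + 1), 1 / (N : ℝ) * trapWeight N j * a j| ≤ E := by
  have hw : ∀ j, 0 ≤ 1 / (N : ℝ) * trapWeight N j := fun j =>
    mul_nonneg (by positivity) (trapWeight_nonneg N j)
  calc _ ≤ ∑ j ∈ Finset.range (N + 1), 1 / (N : ℝ) * trapWeight N j * |a j| := by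
        refine (Finset.abs_sum_le_sum_abs _ _).trans_eq (Finset.sum_congr rfl fun j _ => ?_)
        rw [abs_mul, abs_of_nonneg (hw j)]
    _ ≤ ∑ j ∈ Finset.range (N + 1), 1 / (N : ℝ) * trapWeight N j * E :=
        Finset.sum_le_sum fun j hj =>
          mul_le_mul_of_nonneg_left (ha j (Nat.lt_succ_iff.1 (Finset.mem_range.1 hj))) (hw j)
    _ = E := by rw [← Finset.sum_mul, sum_trapWeight hN, one_mul]

theorem node_mem {N j : ℕ} (hN : 0 < N) (hj : j ≤ N) : (j / N : ℝ) ∈ Icc (0 : ℝ) 1 :=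
  ⟨by positivity, div_le_one_of_le₀ (by exact_mod_cast hj) N.cast_nonneg⟩

theorem G01_of_le {t s : ℝ} (h : s ≤ t) : G01 t s = s / 2 * (t ^ 2 - 2 * t + s) := if_pos h

theorem G01_of_ge {t s : ℝ} (h : t ≤ s) : G01 t s = t ^ 2 / 2 * (s - 1) := by
  rcases h.eq_or_lt with rfl | h
  · rw [G01_of_le le_rfl]; ring
  · exact if_neg h.not_ge

theorem hasDerivAt_G01 (t s : ℝ) : HasDerivAt (G01 t) (t ^ 2 / 2 - t + min s t) s := by
  have hleft : ∀ r ≤ t, HasDerivWithinAt (G01 t) (t ^ 2 / 2 - t + min r t) (Iic t) r := by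
    intro r hr
    have h : HasDerivAt (fun σ : ℝ => σ / 2 * (t ^ 2 - 2 * t + σ)) (t ^ 2 / 2 - t + r) r :=
      (((hasDerivAt_id r).div_const 2).fun_mul ((hasDerivAt_id r).const_add _)).congr_deriv
        (by simp only [id]; ring)
    rw [min_eq_left hr]
    exact h.hasDerivWithinAt.congr (fun σ hσ => G01_of_le hσ) (G01_of_le hr)
  have hright : ∀ r ≥ t, HasDerivWithinAt (G01 t) (t ^ 2 / 2 - t + min r t) (Ici t) r := by
    intro r hr
    have h : HasDerivAt (fun σ : ℝ => t ^ 2 / 2 * (σ - 1)) (t ^ 2 / 2) r := by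
      simpa using ((hasDerivAt_id r).sub_const 1).const_mul (t ^ 2 / 2)
    rw [min_eq_right hr, sub_add_cancel]
    exact h.hasDerivWithinAt.congr (fun σ hσ => G01_of_ge hσ) (G01_of_ge hr)
  rcases lt_trichotomy s t with hst | rfl | hst
  · exact (hleft s hst.le).hasDerivAt (Iic_mem_nhds hst)
  · simpa using (hleft s le_rfl).union (hright s le_rfl)
  · exact (hright s hst.le).hasDerivAt (Ici_mem_nhds hst)

theorem abs_G01_le_one {t s : ℝ} (ht : t ∈ Icc (0 : ℝ) 1) (hs : s ∈ Icc (0 : ℝ) 1) :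
    |G01 t s| ≤ 1 := by
  obtain ⟨ht0, ht1⟩ := ht
  obtain ⟨hs0, hs1⟩ := hs
  rcases le_total s t with h | h
  · rw [G01_of_le h, abs_le]; constructor <;> nlinarith
  · rw [G01_of_ge h, abs_le]; constructor <;> nlinarith

theorem abs_deriv_G01_le_one {t s : ℝ} (ht : t ∈ Icc (0 : ℝ) 1) (hs : s ∈ Icc (0 : ℝ) 1) :
    |t ^ 2 / 2 - t + min s t| ≤ 1 := by
  obtain ⟨ht0, ht1⟩ := ht
  have := min_le_right s t
  have := le_min hs.1 ht0
  rw [abs_le]; constructor <;> nlinarith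

theorem lipschitzOnWith_G01 {t : ℝ} (ht : t ∈ Icc (0 : ℝ) 1) :
    LipschitzOnWith 1 (G01 t) (Icc 0 1) :=
  (convex_Icc 0 1).lipschitzOnWith_of_nnnorm_hasDerivWithin_le
    (fun s _ => (hasDerivAt_G01 t s).hasDerivWithinAt) fun s hs => by
      rw [← NNReal.coe_le_coe, coe_nnnorm, Real.norm_eq_abs]
      exact abs_deriv_G01_le_one ht hs

theorem lipschitzWith_deriv_G01 (t : ℝ) : LipschitzWith 1 fun s => t ^ 2 / 2 - t + min s t := by
  simpa using (LipschitzWith.const (t ^ 2 / 2 - t)).add (LipschitzWith.id.min_const t)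

theorem exists_trapezoidal_error_green_le {ψ : ℝ → ℝ} (hψ : ContDiffOn ℝ 2 ψ (Icc 0 1)) :
    ∃ C, ∀ t ∈ Icc (0 : ℝ) 1, ∀ N : ℕ, 0 < N →
      |trapezoidal_error (fun s => G01 t s * ψ s) N 0 1| ≤ C * (1 / N) ^ 2 := by
  set ψ' := derivWithin ψ (Icc 0 1)
  have hψ' : ContDiffOn ℝ 1 ψ' (Icc 0 1) := hψ.derivWithin uniqueDiffOn_Icc_zero_one le_rfl
  obtain ⟨K0, hK0⟩ := hψ.exists_lipschitzOnWith two_ne_zero (convex_Icc 0 1) isCompact_Icc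
  obtain ⟨K1, hK1⟩ := hψ'.exists_lipschitzOnWith one_ne_zero (convex_Icc 0 1) isCompact_Icc
  obtain ⟨A0, hA0⟩ := exists_nnreal_bound_of_continuousOn_Icc hψ.continuousOn
  obtain ⟨A1, hA1⟩ := exists_nnreal_bound_of_continuousOn_Icc hψ'.continuousOn
  refine ⟨(1 * K0 + A0 * 1 + (1 * K1 + A1 * 1) : ℝ≥0) / 2, fun t ht N hN => ?_⟩
  have hderiv : ∀ s ∈ Icc (0 : ℝ) 1, HasDerivWithinAt (fun s => G01 t s * ψ s)
      ((t ^ 2 / 2 - t + min s t) * ψ s + G01 t s * ψ' s) (Icc 0 1) s := fun s hs =>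
    (hasDerivAt_G01 t s).hasDerivWithinAt.mul
      (hψ.differentiableOn two_ne_zero s hs).hasDerivWithinAt
  have hG : ∀ s ∈ Icc (0 : ℝ) 1, ‖G01 t s‖ ≤ (1 : ℝ≥0) := fun s hs => by
    simpa using abs_G01_le_one ht hs
  have hdG : ∀ s ∈ Icc (0 : ℝ) 1, ‖t ^ 2 / 2 - t + min s t‖ ≤ (1 : ℝ≥0) := fun s hs => by
    simpa using abs_deriv_G01_le_one ht hs
  have hlip := ((lipschitzWith_deriv_G01 t).lipschitzOnWith.mul_of_norm_le hK0 hdG hA0).add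
    ((lipschitzOnWith_G01 ht).mul_of_norm_le hK1 hG hA1)
  convert trapezoidal_error_le_of_lipschitzOnWith zero_le_one hderiv hlip hN using 1
  push_cast
  ring

theorem abs_sum_green_sub_integral_le {ψ : ℝ → ℝ} {Ψ : ℕ → ℝ} {N : ℕ} (hN : 0 < N) {t : ℝ}
    (ht : t ∈ Icc (0 : ℝ) 1) {E : ℝ} (hE : ∀ j ≤ N, |Ψ j - ψ (j / N)| ≤ E) :
    |∑ j ∈ Finset.range (N + 1), 1 / (N : ℝ) * trapWeight N j * G01 t (j / N) * Ψ j
        - ∫ s in (0 : ℝ)..1, G01 t s * ψ s|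
      ≤ E + |trapezoidal_error (fun s => G01 t s * ψ s) N 0 1| := by
  have hsplit : ∑ j ∈ Finset.range (N + 1), 1 / (N : ℝ) * trapWeight N j * G01 t (j / N) * Ψ j
        - ∫ s in (0 : ℝ)..1, G01 t s * ψ s
      = ∑ j ∈ Finset.range (N + 1), 1 / (N : ℝ) * trapWeight N j
            * (G01 t (j / N) * (Ψ j - ψ (j / N)))
        + trapezoidal_error (fun s => G01 t s * ψ s) N 0 1 := by
    rw [trapezoidal_error, ← sum_trapWeight_mul_eq_trapezoidal_integral _ hN,
      add_sub_assoc', ← Finset.sum_add_distrib]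
    congr 1
    exact Finset.sum_congr rfl fun j _ => by ring
  rw [hsplit]
  refine (abs_add_le _ _).trans (add_le_add_left (abs_sum_trapWeight_mul_le hN fun j hj => ?_) _)
  rw [abs_mul]
  exact (mul_le_of_le_one_left (abs_nonneg _) (abs_G01_le_one ht (node_mem hN hj))).trans
    (hE j hj)

theorem integral_green_eq {ψ : ℝ → ℝ} (hψ : ContinuousOn ψ (Icc 0 1)) {t : ℝ}
    (ht : t ∈ Icc (0 : ℝ) 1) :
    ∫ s in (0 : ℝ)..1, G01 t s * ψ s
      = (t ^ 2 - 2 * t) / 2 * (∫ s in (0 : ℝ)..t, s * ψ s)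
        + 1 / 2 * (∫ s in (0 : ℝ)..t, s ^ 2 * ψ s)
        + t ^ 2 / 2 * ((∫ s in (0 : ℝ)..1, (s - 1) * ψ s) - ∫ s in (0 : ℝ)..t, (s - 1) * ψ s) := by
  have h0 : (0 : ℝ) ∈ Icc (0 : ℝ) 1 := left_mem_Icc.2 zero_le_one
  have h1 : (1 : ℝ) ∈ Icc (0 : ℝ) 1 := right_mem_Icc.2 zero_le_one
  have hint : ∀ p : ℝ → ℝ, Continuous p → ∀ {x y : ℝ}, x ∈ Icc (0 : ℝ) 1 → y ∈ Icc (0 : ℝ) 1 →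
      IntervalIntegrable (fun s => p s * ψ s) volume x y := fun p hp x y hx hy =>
    ((hp.continuousOn.mul hψ).mono (Set.uIcc_subset_Icc hx hy)).intervalIntegrable
  have hG : Continuous (G01 t) := continuous_iff_continuousAt.2 fun s =>
    (hasDerivAt_G01 t s).continuousAt
  have hleft : ∫ s in (0 : ℝ)..t, G01 t s * ψ s
      = (t ^ 2 - 2 * t) / 2 * (∫ s in (0 : ℝ)..t, s * ψ s)
        + 1 / 2 * ∫ s in (0 : ℝ)..t, s ^ 2 * ψ s := by
    rw [← intervalIntegral.integral_const_mul, ← intervalIntegral.integral_const_mul,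
      ← intervalIntegral.integral_add ((hint _ (by fun_prop) h0 ht).const_mul _)
        ((hint _ (by fun_prop) h0 ht).const_mul _)]
    refine intervalIntegral.integral_congr fun s hs => ?_
    rw [uIcc_of_le ht.1] at hs
    simp only [G01_of_le hs.2]
    ring
  have hright : ∫ s in t..1, G01 t s * ψ s
      = t ^ 2 / 2 * ((∫ s in (0 : ℝ)..1, (s - 1) * ψ s) - ∫ s in (0 : ℝ)..t, (s - 1) * ψ s) := by
    rw [intervalIntegral.integral_interval_sub_left (hint _ (by fun_prop) h0 h1)
      (hint _ (by fun_prop) h0 ht), ← intervalIntegral.integral_const_mul]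
    refine intervalIntegral.integral_congr fun s hs => ?_
    rw [uIcc_of_le ht.2] at hs
    simp only [G01_of_ge hs.1]
    ring
  rw [← intervalIntegral.integral_add_adjacent_intervals (hint _ hG h0 ht) (hint _ hG ht h1),
    hleft, hright]

theorem contDiffOn_integral_green {ψ : ℝ → ℝ} (hψ : ContDiffOn ℝ 1 ψ (Icc 0 1)) :
    ContDiffOn ℝ 2 (fun t => ∫ s in (0 : ℝ)..1, G01 t s * ψ s) (Icc 0 1) := by
  have hprim : ∀ p : ℝ → ℝ, ContDiff ℝ 1 p →
      ContDiffOn ℝ 2 (fun t => ∫ s in (0 : ℝ)..t, p s * ψ s) (Icc 0 1) := fun p hp =>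
    contDiffOn_integral_Icc (n := 1) zero_lt_one (hp.contDiffOn.mul hψ)
  have h1 := hprim (fun s => s) (by fun_prop)
  have h2 := hprim (fun s => s ^ 2) (by fun_prop)
  have h3 := hprim (fun s => s - 1) (by fun_prop)
  refine ContDiffOn.congr ?_ fun t ht => integral_green_eq hψ.continuousOn ht
  fun_prop

section Iterates

variable {f : ℝ → ℝ → ℝ → ℝ} {φ : ℝ → ℝ} {b1 b2 b3 : ℝ}

theorem contDiffOn_uC {k : ℕ} (hψ : ContDiffOn ℝ 2 (psiC f φ b1 b2 b3 k) (Icc 0 1)) :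
    ContDiffOn ℝ 2 (uC f φ b1 b2 b3 k) (Icc 0 1) := by
  have hg : ContDiff ℝ 2 (gq b1 b2 b3) := by unfold gq; fun_prop
  exact hg.contDiffOn.add (contDiffOn_integral_green (hψ.of_le one_le_two))

theorem contDiffOn_psiC (hφ : ContDiffOn ℝ 2 φ (Icc 0 1)) (hφm : MapsTo φ (Icc 0 1) (Icc 0 1))
    (hf : ContDiffOn ℝ 2 (fun p : ℝ × ℝ × ℝ => f p.1 p.2.1 p.2.2)
      (Icc 0 1 ×ˢ (univ : Set ℝ) ×ˢ (univ : Set ℝ))) (k : ℕ) :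
    ContDiffOn ℝ 2 (psiC f φ b1 b2 b3 k) (Icc 0 1) := by
  have hmaps : ∀ g h : ℝ → ℝ, MapsTo (fun t => (t, g t, h t)) (Icc 0 1)
      (Icc 0 1 ×ˢ (univ : Set ℝ) ×ˢ (univ : Set ℝ)) := fun g h t ht => by simp [ht]
  induction k with
  | zero => exact hf.comp (by fun_prop) (hmaps _ _)
  | succ k ih =>
    have hu := contDiffOn_uC ih
    exact hf.comp (contDiffOn_id.prodMk (hu.prodMk (hu.comp hφ hφm))) (hmaps _ _)

theorem UD_sub_uC (N k i : ℕ) :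
    UD f φ b1 b2 b3 N k i - uC f φ b1 b2 b3 k (i / N)
      = ∑ j ∈ Finset.range (N + 1),
          1 / (N : ℝ) * trapWeight N j * G01 (i / N) (j / N) * PsiD f φ b1 b2 b3 N k j
        - ∫ s in (0 : ℝ)..1, G01 (i / N) s * psiC f φ b1 b2 b3 k s := by
  unfold UD uC; ring

theorem VD_sub_vC (N k i : ℕ) :
    VD f φ b1 b2 b3 N k i - vC f φ b1 b2 b3 k (i / N)
      = ∑ j ∈ Finset.range (N + 1),
          1 / (N : ℝ) * trapWeight N j * G01 (φ (i / N)) (j / N) * PsiD f φ b1 b2 b3 N k j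
        - ∫ s in (0 : ℝ)..1, G01 (φ (i / N)) s * psiC f φ b1 b2 b3 k s := by
  unfold VD vC uC; ring

variable {N k : ℕ} {CΨ CT : ℝ}

theorem abs_UD_sub_uC_le (hN : 0 < N)
    (hΨ : ∀ j ≤ N, |PsiD f φ b1 b2 b3 N k j - psiC f φ b1 b2 b3 k (j / N)| ≤ CΨ * (1 / N) ^ 2)
    (hT : ∀ t ∈ Icc (0 : ℝ) 1,
      |trapezoidal_error (fun s => G01 t s * psiC f φ b1 b2 b3 k s) N 0 1| ≤ CT * (1 / N) ^ 2)
    {i : ℕ} (hi : i ≤ N) :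
    |UD f φ b1 b2 b3 N k i - uC f φ b1 b2 b3 k (i / N)| ≤ (CΨ + CT) * (1 / N) ^ 2 := by
  rw [UD_sub_uC, add_mul]
  exact (abs_sum_green_sub_integral_le hN (node_mem hN hi) hΨ).trans
    (add_le_add le_rfl (hT _ (node_mem hN hi)))

theorem abs_VD_sub_vC_le (hφm : MapsTo φ (Icc 0 1) (Icc 0 1)) (hN : 0 < N)
    (hΨ : ∀ j ≤ N, |PsiD f φ b1 b2 b3 N k j - psiC f φ b1 b2 b3 k (j / N)| ≤ CΨ * (1 / N) ^ 2)
    (hT : ∀ t ∈ Icc (0 : ℝ) 1,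
      |trapezoidal_error (fun s => G01 t s * psiC f φ b1 b2 b3 k s) N 0 1| ≤ CT * (1 / N) ^ 2)
    {i : ℕ} (hi : i ≤ N) :
    |VD f φ b1 b2 b3 N k i - vC f φ b1 b2 b3 k (i / N)| ≤ (CΨ + CT) * (1 / N) ^ 2 := by
  rw [VD_sub_vC, add_mul]
  exact (abs_sum_green_sub_integral_le hN (hφm (node_mem hN hi)) hΨ).trans
    (add_le_add le_rfl (hT _ (hφm (node_mem hN hi))))

theorem exists_abs_PsiD_sub_psiC_le (hφ : ContDiffOn ℝ 2 φ (Icc 0 1))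
    (hφm : MapsTo φ (Icc 0 1) (Icc 0 1))
    (hf : ContDiffOn ℝ 2 (fun p : ℝ × ℝ × ℝ => f p.1 p.2.1 p.2.2)
      (Icc 0 1 ×ˢ (univ : Set ℝ) ×ˢ (univ : Set ℝ)))
    {L1 L2 : ℝ} (hL1 : 0 ≤ L1) (hL2 : 0 ≤ L2)
    (hLip : ∀ t ∈ Icc (0 : ℝ) 1, ∀ u1 u2 v1 v2 : ℝ,
      |f t u2 v2 - f t u1 v1| ≤ L1 * |u2 - u1| + L2 * |v2 - v1|) (k : ℕ) :
    ∃ C, ∀ N : ℕ, 0 < N → ∀ i ≤ N,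
      |PsiD f φ b1 b2 b3 N k i - psiC f φ b1 b2 b3 k (i / N)| ≤ C * (1 / N) ^ 2 := by
  induction k with
  | zero => exact ⟨0, fun N _ i _ => by simp [PsiD, psiC]⟩
  | succ k ih =>
    obtain ⟨CΨ, hΨ⟩ := ih
    obtain ⟨CT, hT⟩ := exists_trapezoidal_error_green_le (contDiffOn_psiC (b1 := b1) (b2 := b2)
      (b3 := b3) hφ hφm hf k)
    refine ⟨(L1 + L2) * (CΨ + CT), fun N hN i hi => ?_⟩
    have hU := abs_UD_sub_uC_le hN (hΨ N hN) (fun t ht => hT t ht N hN) hi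
    have hV := abs_VD_sub_vC_le hφm hN (hΨ N hN) (fun t ht => hT t ht N hN) hi
    calc _ ≤ L1 * |UD f φ b1 b2 b3 N k i - uC f φ b1 b2 b3 k (i / N)|
          + L2 * |VD f φ b1 b2 b3 N k i - vC f φ b1 b2 b3 k (i / N)| :=
          hLip _ (node_mem hN hi) _ _ _ _
      _ ≤ L1 * ((CΨ + CT) * (1 / N) ^ 2) + L2 * ((CΨ + CT) * (1 / N) ^ 2) := by gcongr
      _ = (L1 + L2) * (CΨ + CT) * (1 / N) ^ 2 := by ring

end Iterates

/-- For every fixed `k`, the discrete iterates `U_k` and `V_k` approximate the continuous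
iterates `u_k` and `v_k` at the grid nodes with accuracy `O(h²)`, `h = 1/N`. -/
theorem discrete_iterates_u_v_second_order
    (b1 b2 b3 : ℝ) (φ : ℝ → ℝ) (f : ℝ → ℝ → ℝ → ℝ)
    (hφ : ContDiffOn ℝ 2 φ (Icc 0 1)) (hφm : MapsTo φ (Icc 0 1) (Icc 0 1))
    (hf : ContDiffOn ℝ 2 (fun p : ℝ × ℝ × ℝ => f p.1 p.2.1 p.2.2)
      (Icc 0 1 ×ˢ (univ : Set ℝ) ×ˢ (univ : Set ℝ)))
    (L1 L2 : ℝ) (hL1 : 0 ≤ L1) (hL2 : 0 ≤ L2)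
    (hLip : ∀ t ∈ Icc (0:ℝ) 1, ∀ u1 u2 v1 v2 : ℝ,
      |f t u2 v2 - f t u1 v1| ≤ L1 * |u2 - u1| + L2 * |v2 - v1|) :
    ∀ k : ℕ, ∃ C > (0:ℝ), ∀ N : ℕ, 1 ≤ N → ∀ i : ℕ, i ≤ N →
      |UD f φ b1 b2 b3 N k i - uC f φ b1 b2 b3 k ((i : ℝ) / N)| ≤ C * (1 / (N:ℝ)) ^ 2 ∧
      |VD f φ b1 b2 b3 N k i - vC f φ b1 b2 b3 k ((i : ℝ) / N)| ≤ C * (1 / (N:ℝ)) ^ 2 := by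
  intro k
  obtain ⟨CΨ, hΨ⟩ := exists_abs_PsiD_sub_psiC_le (b1 := b1) (b2 := b2) (b3 := b3)
    hφ hφm hf hL1 hL2 hLip k
  obtain ⟨CT, hT⟩ := exists_trapezoidal_error_green_le (contDiffOn_psiC (b1 := b1) (b2 := b2)
    (b3 := b3) hφ hφm hf k)
  refine ⟨|CΨ + CT| + 1, by positivity, fun N hN i hi => ?_⟩
  have hC : (CΨ + CT) * (1 / (N : ℝ)) ^ 2 ≤ (|CΨ + CT| + 1) * (1 / (N : ℝ)) ^ 2 := by
    gcongr ?_ * _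
    linarith [le_abs_self (CΨ + CT)]
  exact ⟨(abs_UD_sub_uC_le hN (hΨ N hN) (fun t ht => hT t ht N hN) hi).trans hC,
    (abs_VD_sub_vC_le hφm hN (hΨ N hN) (fun t ht => hT t ht N hN) hi).trans hC⟩
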